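/- arXiv:2402.01491 — 3 statements merged into one kernel-verified Lean document; each statement's English description precedes it below -/
import Mathlib

section
/- For a MAG(1)-copula time series V_t = h_θ^{-1}(w_t, w_{t-1}) with w_t iid standard uniform, the joint distribution function of consecutive variables is F_{V_t, V_{t-1}}(a,b) = ∫₀¹ C_θ(a, h_θ(b, v)) dv for a,b ∈ (0,1), and in particular this joint distribution does not depend on t. -/
/-!
On the full-measure event where the innovations lie in `(0, 1)`, strict monotonicity of `h_θ` in
its first argument turns `V_t ≤ a` into `w_t ≤ h_θ(a, w_{t-1})`. Hence `{V_t ≤ a, V_{t-1} ≤ b}` is,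
up to a null set, the preimage under `(w_{t-2}, w_{t-1}, w_t)` of a set that does not depend on `t`,
and by independence this triple has law `U ⊗ U ⊗ U`, `U` uniform on `(0, 1)`: stationarity follows.
By Fubini the measure of that set is `∫ z, ∫_{y ≤ h_θ(b, z)} h_θ(a, y) dy dz`, and the inner
integral is `C_θ(a, h_θ(b, z))` by the fundamental theorem of calculus, since a copula is monotone
and 1-Lipschitz in each argument. As `h_θ` need not be measurable, the argument runs with
`deriv (C_θ a)`, which is, and which agrees with `h_θ a` on `(0, 1)`.
-/

open MeasureTheory ProbabilityTheory Set

structure BivCopula where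
  C : ℝ → ℝ → ℝ
  grounded_left : ∀ u ∈ Icc (0:ℝ) 1, C 0 u = 0
  grounded_right : ∀ u ∈ Icc (0:ℝ) 1, C u 0 = 0
  margin_left : ∀ u ∈ Icc (0:ℝ) 1, C u 1 = u
  margin_right : ∀ u ∈ Icc (0:ℝ) 1, C 1 u = u
  twoIncreasing : ∀ a b c d : ℝ, a ≤ b → c ≤ d →
    0 ≤ C b d - C a d - C b c + C a c

local notation "𝕌" => volume.restrict (Ioo (0:ℝ) 1)

theorem MeasureTheory.Measure.prod_setOf_mem_and_le {α : Type*} [MeasurableSpace α]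
    (μ : Measure α) (ν : Measure ℝ) [SFinite ν] {s : Set α} {f : α → ℝ}
    (hs : MeasurableSet s) (hf : Measurable f) :
    μ.prod ν {q | q.1 ∈ s ∧ q.2 ≤ f q.1} = ∫⁻ x in s, ν (Iic (f x)) ∂μ := by
  have hm : MeasurableSet {q : α × ℝ | q.1 ∈ s ∧ q.2 ≤ f q.1} :=
    (measurable_fst hs).inter (measurableSet_le measurable_snd (hf.comp measurable_fst))
  rw [Measure.prod_apply hm, ← lintegral_indicator hs]
  congr 1
  funext x
  by_cases hx : x ∈ s <;> simp [hx, Iic]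

theorem volume_restrict_Ioo_Iic {c : ℝ} (hc : c ∈ Icc (0:ℝ) 1) :
    𝕌 (Iic c) = ENNReal.ofReal c := by
  rw [Measure.restrict_congr_set Ioo_ae_eq_Ioc, Measure.restrict_apply measurableSet_Iic,
    Iic_inter_Ioc_of_le hc.2, Real.volume_Ioc, sub_zero]

theorem ProbabilityTheory.iIndepFun.map_prodMk_prodMk {Ω ι β : Type*} [MeasurableSpace Ω]
    {μ : Measure Ω} [IsFiniteMeasure μ] [MeasurableSpace β] {f : ι → Ω → β}
    (h : iIndepFun f μ) (hf : ∀ i, Measurable (f i)) {i j k : ι}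
    (hij : i ≠ j) (hik : i ≠ k) (hjk : j ≠ k) :
    μ.map (fun ω => (f i ω, f j ω, f k ω))
      = (μ.map (f i)).prod ((μ.map (f j)).prod (μ.map (f k))) := by
  have hi : IndepFun (f i) (fun ω => (f j ω, f k ω)) μ :=
    (h.indepFun_prodMk hf j k i hij.symm hik.symm).symm
  rw [hi.map_prod_eq_prod_map_map (hf i).aemeasurable ((hf j).prodMk (hf k)).aemeasurable,
    (h.indepFun hjk).map_prod_eq_prod_map_map (hf j).aemeasurable (hf k).aemeasurable]

namespace BivCopula

variable (K : BivCopula) {hθ hθinv : ℝ → ℝ → ℝ} {a b c d x y : ℝ}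

theorem monotoneOn_C (ha : a ∈ Icc (0:ℝ) 1) : MonotoneOn (K.C a) (Icc 0 1) :=
  fun c hc d hd hcd => by
    linarith [K.twoIncreasing 0 a c d ha.1 hcd, K.grounded_left c hc, K.grounded_left d hd]

theorem C_sub_C_le (ha : a ∈ Icc (0:ℝ) 1) (hc : c ∈ Icc (0:ℝ) 1) (hd : d ∈ Icc (0:ℝ) 1)
    (hcd : c ≤ d) : K.C a d - K.C a c ≤ d - c := by
  linarith [K.twoIncreasing a 1 c d ha.2 hcd, K.margin_right c hc, K.margin_right d hd]

theorem lipschitzOnWith_C (ha : a ∈ Icc (0:ℝ) 1) : LipschitzOnWith 1 (K.C a) (Icc 0 1) := by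
  refine LipschitzOnWith.of_dist_le_mul fun x hx y hy => ?_
  rw [Real.dist_eq, Real.dist_eq, NNReal.coe_one, one_mul, abs_sub_le_iff]
  have := le_abs_self (x - y)
  have := neg_abs_le (x - y)
  rcases le_total x y with hxy | hyx
  · have := K.monotoneOn_C ha hx hy hxy
    have := K.C_sub_C_le ha hx hy hxy
    constructor <;> linarith
  · have := K.monotoneOn_C ha hy hx hyx
    have := K.C_sub_C_le ha hy hx hyx
    constructor <;> linarith

theorem mem_Icc_of_hasDerivAt (ha : a ∈ Icc (0:ℝ) 1) (hy : y ∈ Ioo (0:ℝ) 1)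
    (hd : HasDerivAt (K.C a) d y) : d ∈ Icc 0 1 := by
  have hnhds : Icc (0:ℝ) 1 ∈ nhds y := Icc_mem_nhds hy.1 hy.2
  have hacc : AccPt y (Filter.principal (Icc (0:ℝ) 1)) := by
    rw [AccPt, inf_eq_left.2 (Filter.le_principal_iff.2 (mem_nhdsWithin_of_mem_nhds hnhds))]
    infer_instance
  refine ⟨hd.hasDerivWithinAt.nonneg_of_monotoneOn hacc (K.monotoneOn_C ha), ?_⟩
  simpa using (le_abs_self d).trans (hd.le_of_lipschitzOn hnhds (K.lipschitzOnWith_C ha))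

theorem lintegral_Iic_ofReal_hasDerivAt {g : ℝ → ℝ} (ha : a ∈ Icc (0:ℝ) 1)
    (hd : ∀ y ∈ Ioo (0:ℝ) 1, HasDerivAt (K.C a) (g y) y) (hc : c ∈ Icc (0:ℝ) 1) :
    ∫⁻ y in Iic c, ENNReal.ofReal (g y) ∂𝕌 = ENNReal.ofReal (K.C a c) := by
  have hcont : ContinuousOn (K.C a) (Icc 0 c) :=
    (K.lipschitzOnWith_C ha).continuousOn.mono (Icc_subset_Icc_right hc.2)
  have hd' : ∀ y ∈ Ioo 0 c, HasDerivAt (K.C a) (g y) y :=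
    fun y hy => hd y ⟨hy.1, hy.2.trans_le hc.2⟩
  have hg : ∀ y ∈ Ioo 0 c, 0 ≤ g y :=
    fun y hy => (K.mem_Icc_of_hasDerivAt ha ⟨hy.1, hy.2.trans_le hc.2⟩ (hd' y hy)).1
  have hint : IntegrableOn g (Ioo 0 c) :=
    (intervalIntegral.integrableOn_deriv_of_nonneg hcont hd' hg).mono_set Ioo_subset_Ioc_self
  rw [Measure.restrict_congr_set Ioo_ae_eq_Ioc, Measure.restrict_restrict measurableSet_Iic,
    Iic_inter_Ioc_of_le hc.2, ← Measure.restrict_congr_set Ioo_ae_eq_Ioc,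
    ← ofReal_integral_eq_lintegral_ofReal hint (ae_restrict_of_forall_mem measurableSet_Ioo hg),
    ← integral_Ioc_eq_integral_Ioo, ← intervalIntegral.integral_of_le hc.1,
    intervalIntegral.integral_eq_sub_of_hasDerivAt_of_le hc.1 hcont hd'
      (intervalIntegrable_iff_integrableOn_Ioo_of_le hc.1 |>.2 hint),
    K.grounded_right a ha, sub_zero]

theorem toReal_lintegral_ofReal_C (ha : a ∈ Icc (0:ℝ) 1) {g : ℝ → ℝ} (hg : AEMeasurable g 𝕌)
    (hg01 : ∀ᵐ z ∂𝕌, g z ∈ Icc 0 1) :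
    (∫⁻ z, ENNReal.ofReal (K.C a (g z)) ∂𝕌).toReal = ∫ z in (0:ℝ)..1, K.C a (g z) := by
  have hcont : Continuous fun v => K.C a (projIcc (0:ℝ) 1 zero_le_one v) :=
    (K.lipschitzOnWith_C ha).continuousOn.comp_continuous
      (continuous_subtype_val.comp continuous_projIcc) fun v => (projIcc 0 1 _ v).2
  have hmeas : AEStronglyMeasurable (fun z => K.C a (g z)) 𝕌 :=
    (hcont.measurable.comp_aemeasurable hg).aestronglyMeasurable.congr <| by
      filter_upwards [hg01] with z hz
      simp [projIcc_of_mem _ hz]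
  have hnonneg : 0 ≤ᵐ[𝕌] fun z => K.C a (g z) := by
    filter_upwards [hg01] with z hz
    simpa [K.grounded_right a ha] using K.monotoneOn_C ha (left_mem_Icc.2 zero_le_one) hz hz.1
  rw [intervalIntegral.integral_of_le zero_le_one, integral_Ioc_eq_integral_Ioo,
    integral_eq_lintegral_of_nonneg_ae hnonneg hmeas]

/-- A measurable version of the h-function `∂C(a, y)/∂y`; the values `0` for `a ≤ 0` and `1` for
`a ≥ 1` make `x ≤ hfun a y` equivalent to `h_θ⁻¹(x, y) ≤ a` at every level `a`. -/
noncomputable def hfun (a y : ℝ) : ℝ :=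
  if a ≤ 0 then 0 else if 1 ≤ a then 1 else deriv (K.C a) y

theorem measurable_hfun (a : ℝ) : Measurable (K.hfun a) := by
  unfold hfun
  split_ifs
  exacts [measurable_const, measurable_const, measurable_deriv _]

theorem hasDerivAt_hfun (ha : a ∈ Ioo (0:ℝ) 1) (hd : DifferentiableAt ℝ (K.C a) y) :
    HasDerivAt (K.C a) (K.hfun a y) y := by
  rw [hfun, if_neg (not_le.2 ha.1), if_neg (not_le.2 ha.2)]
  exact hd.hasDerivAt

theorem hfun_mem_Icc (hd : ∀ a ∈ Ioo (0:ℝ) 1, DifferentiableAt ℝ (K.C a) y)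
    (hy : y ∈ Ioo (0:ℝ) 1) (a : ℝ) : K.hfun a y ∈ Icc 0 1 := by
  unfold hfun
  split_ifs with h0 h1
  · exact left_mem_Icc.2 zero_le_one
  · exact right_mem_Icc.2 zero_le_one
  · have ha : a ∈ Ioo (0:ℝ) 1 := ⟨not_le.1 h0, not_le.1 h1⟩
    exact K.mem_Icc_of_hasDerivAt (Ioo_subset_Icc_self ha) hy (hd a ha).hasDerivAt

theorem hfun_ae_eq
    (hdef : ∀ u1 ∈ Ioo (0:ℝ) 1, ∀ u2 ∈ Ioo (0:ℝ) 1, HasDerivAt (fun v => K.C u1 v) (hθ u1 u2) u2)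
    (ha : a ∈ Ioo (0:ℝ) 1) : K.hfun a =ᵐ[𝕌] hθ a := by
  filter_upwards [ae_restrict_mem measurableSet_Ioo] with y hy
  exact (K.hasDerivAt_hfun ha (hdef a ha y hy).differentiableAt).unique (hdef a ha y hy)

theorem inv_le_iff_le_hfun
    (hdef : ∀ u1 ∈ Ioo (0:ℝ) 1, ∀ u2 ∈ Ioo (0:ℝ) 1, HasDerivAt (fun v => K.C u1 v) (hθ u1 u2) u2)
    (hmono : ∀ u2 ∈ Ioo (0:ℝ) 1, StrictMonoOn (fun u1 => hθ u1 u2) (Ioo 0 1))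
    (hinv_mem : ∀ u1 ∈ Ioo (0:ℝ) 1, ∀ u2 ∈ Ioo (0:ℝ) 1, hθinv u1 u2 ∈ Ioo (0:ℝ) 1)
    (hinv_right : ∀ u1 ∈ Ioo (0:ℝ) 1, ∀ u2 ∈ Ioo (0:ℝ) 1, hθ (hθinv u1 u2) u2 = u1)
    (hx : x ∈ Ioo (0:ℝ) 1) (hy : y ∈ Ioo (0:ℝ) 1) :
    hθinv x y ≤ a ↔ x ≤ K.hfun a y := by
  have hm := hinv_mem x hx y hy
  by_cases h0 : a ≤ 0
  · simp only [hfun, if_pos h0]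
    exact iff_of_false (by linarith [hm.1]) (by linarith [hx.1])
  by_cases h1 : 1 ≤ a
  · simp only [hfun, if_neg h0, if_pos h1]
    exact iff_of_true (by linarith [hm.2]) hx.2.le
  have ha : a ∈ Ioo (0:ℝ) 1 := ⟨not_le.1 h0, not_le.1 h1⟩
  rw [(K.hasDerivAt_hfun ha (hdef a ha y hy).differentiableAt).unique (hdef a ha y hy),
    ← (hmono y hy).le_iff_le hm ha, hinv_right x hx y hy]

/-- In the coordinates `(w_{t-2}, w_{t-1}, w_t)`, the event `{V_t ≤ a, V_{t-1} ≤ b}` up to a null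
set. -/
def magEvent (a b : ℝ) : Set (ℝ × ℝ × ℝ) :=
  {p | p.2.2 ≤ K.hfun a p.2.1 ∧ p.2.1 ≤ K.hfun b p.1}

theorem measurableSet_magEvent (a b : ℝ) : MeasurableSet (K.magEvent a b) :=
  (measurableSet_le measurable_snd.snd ((K.measurable_hfun a).comp measurable_snd.fst)).inter
    (measurableSet_le measurable_snd.fst ((K.measurable_hfun b).comp measurable_fst))

theorem prod_prod_magEvent
    (hd : ∀ a ∈ Ioo (0:ℝ) 1, ∀ y ∈ Ioo (0:ℝ) 1, DifferentiableAt ℝ (K.C a) y)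
    (ha : a ∈ Ioo (0:ℝ) 1) (b : ℝ) :
    (𝕌).prod ((𝕌).prod 𝕌) (K.magEvent a b)
      = ∫⁻ z, ENNReal.ofReal (K.C a (K.hfun b z)) ∂𝕌 := by
  rw [Measure.prod_apply (K.measurableSet_magEvent a b)]
  refine lintegral_congr_ae ?_
  filter_upwards [ae_restrict_mem measurableSet_Ioo] with z hz
  have hslice :
      Prod.mk z ⁻¹' K.magEvent a b = {q | q.1 ∈ Iic (K.hfun b z) ∧ q.2 ≤ K.hfun a q.1} := by
    ext q
    simp [magEvent, and_comm]
  rw [hslice, Measure.prod_setOf_mem_and_le _ _ measurableSet_Iic (K.measurable_hfun a)]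
  calc ∫⁻ y in Iic (K.hfun b z), 𝕌 (Iic (K.hfun a y)) ∂𝕌
      = ∫⁻ y in Iic (K.hfun b z), ENNReal.ofReal (K.hfun a y) ∂𝕌 := by
        refine lintegral_congr_ae (ae_restrict_of_ae ?_)
        filter_upwards [ae_restrict_mem measurableSet_Ioo] with y hy
        exact volume_restrict_Ioo_Iic (K.hfun_mem_Icc (hd · · y hy) hy a)
    _ = ENNReal.ofReal (K.C a (K.hfun b z)) :=
        K.lintegral_Iic_ofReal_hasDerivAt (Ioo_subset_Icc_self ha)
          (fun y hy => K.hasDerivAt_hfun ha (hd a ha y hy)) (K.hfun_mem_Icc (hd · · z hz) hz b)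

theorem toReal_prod_prod_magEvent
    (hdef : ∀ u1 ∈ Ioo (0:ℝ) 1, ∀ u2 ∈ Ioo (0:ℝ) 1, HasDerivAt (fun v => K.C u1 v) (hθ u1 u2) u2)
    (ha : a ∈ Ioo (0:ℝ) 1) (hb : b ∈ Ioo (0:ℝ) 1) :
    ((𝕌).prod ((𝕌).prod 𝕌) (K.magEvent a b)).toReal = ∫ v in (0:ℝ)..1, K.C a (hθ b v) := by
  have hd := fun a ha y hy => (hdef a ha y hy).differentiableAt
  have hb' := K.hfun_ae_eq hdef hb
  rw [K.prod_prod_magEvent hd ha, lintegral_congr_ae (by filter_upwards [hb'] with z hz; rw [hz])]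
  refine K.toReal_lintegral_ofReal_C (Ioo_subset_Icc_self ha)
    ((K.measurable_hfun b).aemeasurable.congr hb') ?_
  filter_upwards [hb', ae_restrict_mem measurableSet_Ioo] with z hz hz'
  exact hz ▸ K.hfun_mem_Icc (hd · · z hz') hz' b

end BivCopula

theorem stmt8_general
    {Ω : Type*} [MeasurableSpace Ω] (μ : Measure Ω) [IsProbabilityMeasure μ]
    (w : ℤ → Ω → ℝ) (hwmeas : ∀ t, Measurable (w t))
    (hwiid : iIndepFun w μ)
    (hwunif : ∀ t, Measure.map (w t) μ = volume.restrict (Ioo (0:ℝ) 1))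
    (K : BivCopula) (hθ : ℝ → ℝ → ℝ)
    (hdef : ∀ u1 ∈ Ioo (0:ℝ) 1, ∀ u2 ∈ Ioo (0:ℝ) 1,
      HasDerivAt (fun v => K.C u1 v) (hθ u1 u2) u2)
    (hmono : ∀ u2 ∈ Ioo (0:ℝ) 1, StrictMonoOn (fun u1 => hθ u1 u2) (Ioo 0 1))
    (hθinv : ℝ → ℝ → ℝ)
    (hinv_mem : ∀ u1 ∈ Ioo (0:ℝ) 1, ∀ u2 ∈ Ioo (0:ℝ) 1, hθinv u1 u2 ∈ Ioo (0:ℝ) 1)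
    (hinv_right : ∀ u1 ∈ Ioo (0:ℝ) 1, ∀ u2 ∈ Ioo (0:ℝ) 1, hθ (hθinv u1 u2) u2 = u1)
    (V : ℤ → Ω → ℝ)
    (hV : ∀ t : ℤ, ∀ ω : Ω, V t ω = hθinv (w t ω) (w (t - 1) ω)) :
    (∀ t : ℤ, ∀ a ∈ Ioo (0:ℝ) 1, ∀ b ∈ Ioo (0:ℝ) 1,
      (μ {ω | V t ω ≤ a ∧ V (t - 1) ω ≤ b}).toReal
        = ∫ v in (0:ℝ)..1, K.C a (hθ b v)) ∧
    (∀ s t : ℤ, ∀ a b : ℝ,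
      μ {ω | V t ω ≤ a ∧ V (t - 1) ω ≤ b}
        = μ {ω | V s ω ≤ a ∧ V (s - 1) ω ≤ b}) := by
  have hw01 (s : ℤ) : ∀ᵐ ω ∂μ, w s ω ∈ Ioo (0:ℝ) 1 :=
    ae_of_ae_map (hwmeas s).aemeasurable (hwunif s ▸ ae_restrict_mem measurableSet_Ioo)
  have key (t : ℤ) (a b : ℝ) :
      μ {ω | V t ω ≤ a ∧ V (t - 1) ω ≤ b} = (𝕌).prod ((𝕌).prod 𝕌) (K.magEvent a b) := by
    have hlaw : μ.map (fun ω => (w (t - 2) ω, w (t - 1) ω, w t ω)) = (𝕌).prod ((𝕌).prod 𝕌) := by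
      rw [hwiid.map_prodMk_prodMk hwmeas (by omega) (by omega) (by omega), hwunif, hwunif, hwunif]
    rw [← hlaw, Measure.map_apply ((hwmeas _).prodMk ((hwmeas _).prodMk (hwmeas _)))
      (K.measurableSet_magEvent a b)]
    refine measure_congr (Filter.eventuallyEq_set.2 ?_)
    filter_upwards [hw01 t, hw01 (t - 1), hw01 (t - 2)] with ω h0 h1 h2
    simp only [mem_ofPred_eq, mem_preimage, BivCopula.magEvent, hV, sub_sub, one_add_one_eq_two,
      K.inv_le_iff_le_hfun hdef hmono hinv_mem hinv_right h0 h1,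
      K.inv_le_iff_le_hfun hdef hmono hinv_mem hinv_right h1 h2]
  exact ⟨fun t a ha b hb => by rw [key, K.toReal_prod_prod_magEvent hdef ha hb],
    fun s t a b => by rw [key, key]⟩

/-- for a MAG(1)-copula time series `V_t = h_θ⁻¹(w_t, w_{t-1})` with
`w_t` iid standard uniform, the joint distribution function of consecutive
variables is `F_{V_t, V_{t-1}}(a,b) = ∫₀¹ C_θ(a, h_θ(b, v)) dv` for
`a, b ∈ (0,1)`; in particular the joint distribution does not depend on `t`. -/
theorem stmt8
    {Ω : Type*} [MeasurableSpace Ω] (μ : Measure Ω) [IsProbabilityMeasure μ]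
    (w : ℤ → Ω → ℝ) (hwmeas : ∀ t, Measurable (w t))
    (hwiid : iIndepFun w μ)
    (hwunif : ∀ t, Measure.map (w t) μ = volume.restrict (Ioo (0:ℝ) 1))
    (K : BivCopula) (hθ : ℝ → ℝ → ℝ)
    (hdef : ∀ u1 ∈ Ioo (0:ℝ) 1, ∀ u2 ∈ Ioo (0:ℝ) 1,
      HasDerivAt (fun v => K.C u1 v) (hθ u1 u2) u2)
    (hmono : ∀ u2 ∈ Ioo (0:ℝ) 1, StrictMonoOn (fun u1 => hθ u1 u2) (Ioo 0 1))
    (hθinv : ℝ → ℝ → ℝ)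
    (hinv_mem : ∀ u1 ∈ Ioo (0:ℝ) 1, ∀ u2 ∈ Ioo (0:ℝ) 1, hθinv u1 u2 ∈ Ioo (0:ℝ) 1)
    (hinv_right : ∀ u1 ∈ Ioo (0:ℝ) 1, ∀ u2 ∈ Ioo (0:ℝ) 1, hθ (hθinv u1 u2) u2 = u1)
    (hinv_left : ∀ u1 ∈ Ioo (0:ℝ) 1, ∀ u2 ∈ Ioo (0:ℝ) 1, hθinv (hθ u1 u2) u2 = u1)
    (V : ℤ → Ω → ℝ)
    (hV : ∀ t : ℤ, ∀ ω : Ω, V t ω = hθinv (w t ω) (w (t - 1) ω)) :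
    (∀ t : ℤ, ∀ a ∈ Ioo (0:ℝ) 1, ∀ b ∈ Ioo (0:ℝ) 1,
      (μ {ω | V t ω ≤ a ∧ V (t - 1) ω ≤ b}).toReal
        = ∫ v in (0:ℝ)..1, K.C a (hθ b v)) ∧
    (∀ s t : ℤ, ∀ a b : ℝ,
      μ {ω | V t ω ≤ a ∧ V (t - 1) ω ≤ b}
        = μ {ω | V s ω ≤ a ∧ V (s - 1) ω ≤ b}) :=
  stmt8_general μ w hwmeas hwiid hwunif K hθ hdef hmono hθinv hinv_mem hinv_right V hV
end

section
/- The function G(a,b) = ∫₀¹ C_θ(a, h_θ(b, v)) dv is a bivariate copula: it satisfies G(a,1) = a, G(1,b) = b, G(a,0) = G(0,b) = 0, and is 2-increasing. -/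
open Set

/-- the function `G(a,b) = ∫₀¹ C_θ(a, h_θ(b, v)) dv` is a bivariate
copula: it satisfies `G(a,1) = a`, `G(1,b) = b`, `G(a,0) = G(0,b) = 0`, and is
2-increasing. -/
theorem stmt9
    (C : ℝ → ℝ → ℝ) (hθ : ℝ → ℝ → ℝ)
    -- `C` is a differentiable bivariate copula with h-function `h_θ = ∂C/∂u2`:
    (hdef : ∀ u1 ∈ Icc (0:ℝ) 1, ∀ u2 ∈ Ioo (0:ℝ) 1,
      HasDerivAt (fun v => C u1 v) (hθ u1 u2) u2)
    (hmargin_left : ∀ a ∈ Icc (0:ℝ) 1, C a 1 = a)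
    (hmargin_right : ∀ b ∈ Icc (0:ℝ) 1, C 1 b = b)
    (hgrounded_left : ∀ a ∈ Icc (0:ℝ) 1, C a 0 = 0)
    (hgrounded_right : ∀ b ∈ Icc (0:ℝ) 1, C 0 b = 0)
    (hbounds : ∀ a ∈ Icc (0:ℝ) 1, ∀ b ∈ Icc (0:ℝ) 1, C a b ∈ Icc (0:ℝ) 1)
    (h2inc : ∀ a b c d : ℝ, a ≤ b → c ≤ d → 0 ≤ C b d - C a d - C b c + C a c)
    (hθ_one : ∀ v ∈ Ioo (0:ℝ) 1, hθ 1 v = 1)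
    (hθ_zero : ∀ v ∈ Ioo (0:ℝ) 1, hθ 0 v = 0)
    (G : ℝ → ℝ → ℝ)
    (hG : ∀ a b : ℝ, G a b = ∫ v in (0:ℝ)..1, C a (hθ b v)) :
    (∀ a ∈ Icc (0:ℝ) 1, G a 1 = a) ∧
    (∀ b ∈ Icc (0:ℝ) 1, G 1 b = b) ∧
    (∀ a ∈ Icc (0:ℝ) 1, G a 0 = 0) ∧
    (∀ b ∈ Icc (0:ℝ) 1, G 0 b = 0) ∧
    (∀ a b c d : ℝ, a ∈ Icc (0:ℝ) 1 → b ∈ Icc (0:ℝ) 1 → c ∈ Icc (0:ℝ) 1 →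
      d ∈ Icc (0:ℝ) 1 → a ≤ b → c ≤ d →
      0 ≤ G b d - G a d - G b c + G a c) := by
  classical
  -- monotonicity of C in the second argument on [0,1]
  have mono2 : ∀ b ∈ Icc (0:ℝ) 1, ∀ c ∈ Icc (0:ℝ) 1, ∀ d ∈ Icc (0:ℝ) 1,
      c ≤ d → C b c ≤ C b d := by
    intro b hb c hc d hd hcd
    have h := h2inc 0 b c d hb.1 hcd
    rw [hgrounded_right d hd, hgrounded_right c hc] at h
    linarith
  -- 1-Lipschitz of C in the second argument on [0,1]
  have lip2 : ∀ b ∈ Icc (0:ℝ) 1, ∀ c ∈ Icc (0:ℝ) 1, ∀ d ∈ Icc (0:ℝ) 1,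
      c ≤ d → C b d - C b c ≤ d - c := by
    intro b hb c hc d hd hcd
    have h := h2inc b 1 c d hb.2 hcd
    rw [hmargin_right d hd, hmargin_right c hc] at h
    linarith
  -- slopes converge to hθ from the right
  have slope_tendsto : ∀ b ∈ Icc (0:ℝ) 1, ∀ v ∈ Ioo (0:ℝ) 1,
      Filter.Tendsto (fun y => (C b y - C b v) / (y - v)) (nhdsWithin v (Ioi v))
        (nhds (hθ b v)) := by
    intro b hb v hv
    have h := hasDerivAt_iff_tendsto_slope.mp (hdef b hb v hv)
    have h2 := h.mono_left (nhdsWithin_mono v (fun x hx => ne_of_gt hx))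
    refine h2.congr (fun y => ?_)
    rw [slope_def_field]
  have hIoo_mem : ∀ v ∈ Ioo (0:ℝ) 1, Ioo v 1 ∈ nhdsWithin v (Ioi v) := by
    intro v hv
    exact Ioo_mem_nhdsGT_of_mem ⟨le_rfl, hv.2⟩
  -- hθ b v ∈ [0,1]
  have hθ_mem : ∀ b ∈ Icc (0:ℝ) 1, ∀ v ∈ Ioo (0:ℝ) 1, hθ b v ∈ Icc (0:ℝ) 1 := by
    intro b hb v hv
    have hT := slope_tendsto b hb v hv
    have hvI : v ∈ Icc (0:ℝ) 1 := ⟨hv.1.le, hv.2.le⟩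
    constructor
    · refine ge_of_tendsto hT ?_
      filter_upwards [hIoo_mem v hv] with y hy
      have hyI : y ∈ Icc (0:ℝ) 1 := ⟨(hv.1.trans hy.1).le, hy.2.le⟩
      have := mono2 b hb v hvI y hyI hy.1.le
      have hpos : (0:ℝ) < y - v := by linarith [hy.1]
      exact div_nonneg (by linarith) hpos.le
    · refine le_of_tendsto hT ?_
      filter_upwards [hIoo_mem v hv] with y hy
      have hyI : y ∈ Icc (0:ℝ) 1 := ⟨(hv.1.trans hy.1).le, hy.2.le⟩
      have := lip2 b hb v hvI y hyI hy.1.le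
      have hpos : (0:ℝ) < y - v := by linarith [hy.1]
      rw [div_le_one hpos]
      linarith
  -- hθ is monotone in its first argument
  have hθ_mono : ∀ a ∈ Icc (0:ℝ) 1, ∀ b ∈ Icc (0:ℝ) 1, a ≤ b →
      ∀ v ∈ Ioo (0:ℝ) 1, hθ a v ≤ hθ b v := by
    intro a ha b hb hab v hv
    refine le_of_tendsto_of_tendsto (slope_tendsto a ha v hv) (slope_tendsto b hb v hv) ?_
    filter_upwards [hIoo_mem v hv] with y hy
    have hpos : (0:ℝ) < y - v := by linarith [hy.1]
    have h := h2inc a b v y hab hy.1.le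
    exact div_le_div_of_nonneg_right (by linarith) hpos.le
  -- continuity of C b on [0,1] in the second variable
  have hcont : ∀ b ∈ Icc (0:ℝ) 1, ContinuousOn (fun v => C b v) (Icc (0:ℝ) 1) := by
    intro b hb
    have : LipschitzOnWith 1 (fun v => C b v) (Icc (0:ℝ) 1) := by
      rw [lipschitzOnWith_iff_dist_le_mul]
      intro x hx y hy
      rw [Real.dist_eq, Real.dist_eq]
      push_cast
      rw [one_mul]
      rcases le_total x y with h | h
      · have h1 := mono2 b hb x hx y hy h
        have h2 := lip2 b hb x hx y hy h
        rw [abs_sub_comm, abs_of_nonneg (by linarith), abs_sub_comm, abs_of_nonneg (by linarith)]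
        linarith
      · have h1 := mono2 b hb y hy x hx h
        have h2 := lip2 b hb y hy x hx h
        rw [abs_of_nonneg (by linarith), abs_of_nonneg (by linarith)]
        linarith
    exact this.continuousOn
  -- deriv agrees with hθ on (0,1)
  have hD : ∀ b ∈ Icc (0:ℝ) 1, ∀ v ∈ Ioo (0:ℝ) 1,
      deriv (fun x => C b x) v = hθ b v := by
    intro b hb v hv
    exact (hdef b hb v hv).deriv
  -- a.e. x ≠ 1
  have hone : ∀ᵐ x : ℝ, x ∈ ({(1:ℝ)}ᶜ : Set ℝ) :=
    MeasureTheory.compl_mem_ae_iff.mpr Real.volume_singleton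
  have hzero : ∀ᵐ x : ℝ, x ∈ ({(0:ℝ)}ᶜ : Set ℝ) :=
    MeasureTheory.compl_mem_ae_iff.mpr Real.volume_singleton
  -- clamp to [0,1]
  set proj : ℝ → ℝ := fun x => max 0 (min 1 x) with hproj
  have proj_mem : ∀ x, proj x ∈ Icc (0:ℝ) 1 := by
    intro x
    constructor
    · exact le_max_left _ _
    · simp [hproj]
  have proj_id : ∀ x ∈ Icc (0:ℝ) 1, proj x = x := by
    intro x hx
    simp [hproj, min_eq_right hx.2, max_eq_right hx.1]
  have proj_cont : Continuous proj := by
    exact continuous_const.max (continuous_const.min continuous_id)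
  -- measurable bounded version of the integrand
  have F_int : ∀ a ∈ Icc (0:ℝ) 1, ∀ b : ℝ,
      IntervalIntegrable (fun v => C a (proj (deriv (fun x => C b x) v))) MeasureTheory.volume 0 1 := by
    intro a ha b
    rw [intervalIntegrable_iff_integrableOn_Ioc_of_le zero_le_one]
    have hcontc : Continuous fun x => C a (proj x) :=
      ContinuousOn.comp_continuous (hcont a ha) proj_cont proj_mem
    have hmeas : Measurable fun v => C a (proj (deriv (fun x => C b x) v)) :=
      hcontc.measurable.comp (measurable_deriv _)
    refine MeasureTheory.Integrable.mono' (MeasureTheory.integrable_const 1)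
      hmeas.aestronglyMeasurable.restrict ?_
    refine MeasureTheory.ae_of_all _ (fun v => ?_)
    have hmem := hbounds a ha (proj (deriv (fun x => C b x) v)) (proj_mem _)
    rw [Real.norm_eq_abs]
    exact abs_le.mpr ⟨by linarith [hmem.1], hmem.2⟩
  -- the integrand agrees a.e. with its measurable version
  have congrF : ∀ a : ℝ, ∀ b ∈ Icc (0:ℝ) 1,
      (∫ v in (0:ℝ)..1, C a (hθ b v)) =
        ∫ v in (0:ℝ)..1, C a (proj (deriv (fun x => C b x) v)) := by
    intro a b hb
    refine intervalIntegral.integral_congr_ae ?_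
    filter_upwards [hone] with x hx hxI
    rw [Set.uIoc_of_le (zero_le_one' ℝ)] at hxI
    have hxo : x ∈ Ioo (0:ℝ) 1 := ⟨hxI.1, lt_of_le_of_ne hxI.2 hx⟩
    rw [hD b hb x hxo, proj_id _ (hθ_mem b hb x hxo)]
  -- integral of a function a.e. equal to a constant on (0,1)
  have const_int : ∀ f : ℝ → ℝ, ∀ c : ℝ, (∀ x ∈ Ioo (0:ℝ) 1, f x = c) →
      (∫ v in (0:ℝ)..1, f v) = c := by
    intro f c hf
    have : (∫ v in (0:ℝ)..1, f v) = ∫ v in (0:ℝ)..1, c := by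
      refine intervalIntegral.integral_congr_ae ?_
      filter_upwards [hone] with x hx hxI
      rw [Set.uIoc_of_le (zero_le_one' ℝ)] at hxI
      exact hf x ⟨hxI.1, lt_of_le_of_ne hxI.2 hx⟩
    rw [this, intervalIntegral.integral_const]
    simp
  refine ⟨?_, ?_, ?_, ?_, ?_⟩
  · -- G a 1 = a
    intro a ha
    rw [hG]
    exact const_int _ a (fun v hv => by rw [hθ_one v hv, hmargin_left a ha])
  · -- G 1 b = b
    intro b hb
    rw [hG]
    have h1 : (∫ v in (0:ℝ)..1, C 1 (hθ b v)) =
        ∫ v in (0:ℝ)..1, deriv (fun x => C b x) v := by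
      refine intervalIntegral.integral_congr_ae ?_
      filter_upwards [hone] with x hx hxI
      rw [Set.uIoc_of_le (zero_le_one' ℝ)] at hxI
      have hxo : x ∈ Ioo (0:ℝ) 1 := ⟨hxI.1, lt_of_le_of_ne hxI.2 hx⟩
      rw [hmargin_right _ (hθ_mem b hb x hxo), hD b hb x hxo]
    rw [h1]
    have hint : IntervalIntegrable (deriv (fun x => C b x)) MeasureTheory.volume 0 1 := by
      rw [intervalIntegrable_iff_integrableOn_Ioc_of_le zero_le_one]
      refine MeasureTheory.Integrable.mono' (MeasureTheory.integrable_const 1)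
        (measurable_deriv _).aestronglyMeasurable.restrict ?_
      rw [MeasureTheory.ae_restrict_iff' measurableSet_Ioc]
      filter_upwards [hone] with x hx hxI
      have hxo : x ∈ Ioo (0:ℝ) 1 := ⟨hxI.1, lt_of_le_of_ne hxI.2 hx⟩
      rw [Real.norm_eq_abs, hD b hb x hxo]
      have hm := hθ_mem b hb x hxo
      exact abs_le.mpr ⟨by linarith [hm.1], hm.2⟩
    have := intervalIntegral.integral_eq_sub_of_hasDerivAt_of_le zero_le_one
      (hcont b hb) (fun x hx => by rw [hD b hb x hx]; exact hdef b hb x hx) hint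
    rw [this, hmargin_left b hb, hgrounded_left b hb]
    ring
  · -- G a 0 = 0
    intro a ha
    rw [hG]
    exact const_int _ 0 (fun v hv => by rw [hθ_zero v hv, hgrounded_left a ha])
  · -- G 0 b = 0
    intro b hb
    rw [hG]
    exact const_int _ 0 (fun v hv => hgrounded_right _ (hθ_mem b hb v hv))
  · -- 2-increasing
    intro a b c d ha hb hc hd hab hcd
    rw [hG, hG, hG, hG, congrF b d hd, congrF a d hd, congrF b c hc, congrF a c hc]
    have Ibd := F_int b hb d
    have Iad := F_int a ha d
    have Ibc := F_int b hb c
    have Iac := F_int a ha c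
    have key : (0:ℝ) ≤ ∫ v in (0:ℝ)..1,
        (C b (proj (deriv (fun x => C d x) v)) - C a (proj (deriv (fun x => C d x) v))
          - C b (proj (deriv (fun x => C c x) v)) + C a (proj (deriv (fun x => C c x) v))) := by
      refine intervalIntegral.integral_nonneg_of_ae_restrict zero_le_one ?_
      rw [Filter.EventuallyLE, MeasureTheory.ae_restrict_iff' measurableSet_Icc]
      filter_upwards [hone, hzero] with x hx1 hx0 hxI
      have hxo : x ∈ Ioo (0:ℝ) 1 :=
        ⟨lt_of_le_of_ne hxI.1 (Ne.symm hx0), lt_of_le_of_ne hxI.2 hx1⟩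
      rw [hD d hd x hxo, hD c hc x hxo, proj_id _ (hθ_mem d hd x hxo),
        proj_id _ (hθ_mem c hc x hxo)]
      exact h2inc a b (hθ c x) (hθ d x) hab (hθ_mono c hc d hd hcd x hxo)
    rw [intervalIntegral.integral_add ((Ibd.sub Iad).sub Ibc) Iac,
      intervalIntegral.integral_sub (Ibd.sub Iad) Ibc,
      intervalIntegral.integral_sub Ibd Iad] at key
    linarith
end

section
/- For |φ| < 1, let h_φ^{-1}(u1,u2) = Φ(Φ^{-1}(u1)(1−φ²)^{1/2} + φΦ^{-1}(u2)) be the inverse h-function of the normal copula; then the n-fold composition A_{t,n} = h_φ^{-1}(w_t, ·) ∘ h_φ^{-1}(w_{t-1}, ·) ∘ ... ∘ h_φ^{-1}(w_{t-n}, ·), with the innermost function evaluated at x ∈ (0,1), admits the closed form A_{t,n} = Φ((1−φ²)^{1/2} Σ_{i=0}^{n} φ^i Φ^{-1}(w_{t−i}) + φ^{n+1} Φ^{-1}(x)). -/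
open Set

/-- Standard normal CDF `Φ`. -/
noncomputable def stdNormalCDF (x : ℝ) : ℝ :=
  (ProbabilityTheory.gaussianReal 0 1 (Set.Iic x)).toReal

/-- Standard normal quantile function `Φ⁻¹`. -/
noncomputable def stdNormalQuantile : ℝ → ℝ := Function.invFun stdNormalCDF

/-- Inverse (in the first argument) normal-copula h-function
`h_φ⁻¹(u1,u2) = Φ(Φ⁻¹(u1)√(1−φ²) + φΦ⁻¹(u2))`. -/
noncomputable def normalHInv (φ u1 u2 : ℝ) : ℝ :=
  stdNormalCDF (stdNormalQuantile u1 * Real.sqrt (1 - φ ^ 2) + φ * stdNormalQuantile u2)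

/-- The `n`-fold composition
`A_{t,n}(x) = h_φ⁻¹(w_t, ·) ∘ h_φ⁻¹(w_{t-1}, ·) ∘ ⋯ ∘ h_φ⁻¹(w_{t-n}, ·)(x)`,
composed in the second argument with innermost innovation `w_{t-n}`. -/
noncomputable def compA (φ : ℝ) (w : ℤ → ℝ) (t : ℤ) : ℕ → ℝ → ℝ
  | 0, x => normalHInv φ (w t) x
  | n + 1, x => compA φ w t n (normalHInv φ (w (t - (n + 1))) x)

lemma stdNormalCDF_strictMono : StrictMono stdNormalCDF := by
  intro a b hab
  unfold stdNormalCDF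
  have hac := ProbabilityTheory.gaussianReal_absolutelyContinuous' 0 (v := 1) one_ne_zero
  have hpos : 0 < ProbabilityTheory.gaussianReal 0 1 (Set.Ioc a b) := by
    rw [pos_iff_ne_zero]
    intro h
    have := hac h
    rw [Real.volume_Ioc] at this
    simp [ENNReal.ofReal_eq_zero, not_le.mpr (sub_pos.mpr hab)] at this
  have hsplit : ProbabilityTheory.gaussianReal 0 1 (Set.Iic b) =
      ProbabilityTheory.gaussianReal 0 1 (Set.Iic a) +
      ProbabilityTheory.gaussianReal 0 1 (Set.Ioc a b) := by
    rw [← MeasureTheory.measure_union (Set.Iic_disjoint_Ioc le_rfl) measurableSet_Ioc,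
      Set.Iic_union_Ioc_eq_Iic hab.le]
  have hfin : ProbabilityTheory.gaussianReal 0 1 (Set.Iic b) ≠ ⊤ :=
    MeasureTheory.measure_ne_top _ _
  have hlt : ProbabilityTheory.gaussianReal 0 1 (Set.Iic a) <
      ProbabilityTheory.gaussianReal 0 1 (Set.Iic b) := by
    rw [hsplit]
    refine ENNReal.lt_add_right ?_ hpos.ne'
    intro h
    rw [hsplit, h] at hfin
    simp at hfin
  exact ENNReal.toReal_strict_mono hfin hlt

lemma stdNormalQuantile_cdf (y : ℝ) : stdNormalQuantile (stdNormalCDF y) = y :=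
  Function.leftInverse_invFun stdNormalCDF_strictMono.injective y

lemma stdNormalCDF_mem (y : ℝ) : stdNormalCDF y ∈ Ioo (0:ℝ) 1 := by
  have hac := ProbabilityTheory.gaussianReal_absolutelyContinuous' 0 (v := 1) one_ne_zero
  have h1 : ProbabilityTheory.gaussianReal 0 1 (Set.Iic y) ≠ 0 := by
    intro h
    have := hac h
    simp [Real.volume_Iic] at this
  have h2 : ProbabilityTheory.gaussianReal 0 1 (Set.Ioi y) ≠ 0 := by
    intro h
    have := hac h
    simp [Real.volume_Ioi] at this
  have hfin : ProbabilityTheory.gaussianReal 0 1 (Set.Iic y) ≠ ⊤ :=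
    MeasureTheory.measure_ne_top _ _
  constructor
  · unfold stdNormalCDF
    exact ENNReal.toReal_pos h1 hfin
  · have hlt : ProbabilityTheory.gaussianReal 0 1 (Set.Iic y) < 1 := by
      have huniv : ProbabilityTheory.gaussianReal 0 1 (Set.Iic y) +
          ProbabilityTheory.gaussianReal 0 1 (Set.Ioi y) = 1 := by
        rw [← MeasureTheory.measure_union (Set.Iic_disjoint_Ioi le_rfl) measurableSet_Ioi,
          Set.Iic_union_Ioi, MeasureTheory.measure_univ]
      calc ProbabilityTheory.gaussianReal 0 1 (Set.Iic y)
          < ProbabilityTheory.gaussianReal 0 1 (Set.Iic y) +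
            ProbabilityTheory.gaussianReal 0 1 (Set.Ioi y) :=
            ENNReal.lt_add_right hfin h2
        _ = 1 := huniv
    unfold stdNormalCDF
    have := (ENNReal.toReal_lt_toReal hfin ENNReal.one_ne_top).mpr hlt
    simpa using this

lemma normalHInv_mem (φ u1 u2 : ℝ) : normalHInv φ u1 u2 ∈ Ioo (0:ℝ) 1 :=
  stdNormalCDF_mem _

/-- for `|φ| < 1`, the composition `A_{t,n}` evaluated at
`x ∈ (0,1)` admits the closed form
`A_{t,n}(x) = Φ(√(1−φ²) Σ_{i=0}^{n} φ^i Φ⁻¹(w_{t−i}) + φ^{n+1} Φ⁻¹(x))`. -/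
theorem stmt11 (φ : ℝ) (hφ : |φ| < 1) (w : ℤ → ℝ)
    (hw : ∀ s : ℤ, w s ∈ Ioo (0:ℝ) 1) (t : ℤ) (n : ℕ) (x : ℝ)
    (hx : x ∈ Ioo (0:ℝ) 1) :
    compA φ w t n x =
      stdNormalCDF (Real.sqrt (1 - φ ^ 2) *
        (∑ i ∈ Finset.range (n + 1), φ ^ i * stdNormalQuantile (w (t - i)))
        + φ ^ (n + 1) * stdNormalQuantile x) := by
  induction n generalizing x with
  | zero =>
    show normalHInv φ (w t) x = _
    unfold normalHInv
    congr 1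
    simp only [zero_add, Finset.sum_range_one, pow_zero, pow_one, one_mul, Nat.cast_zero, sub_zero]
    ring
  | succ n ih =>
    show compA φ w t n (normalHInv φ (w (t - (n + 1))) x) = _
    rw [ih _ (normalHInv_mem _ _ _)]
    unfold normalHInv
    rw [stdNormalQuantile_cdf]
    congr 1
    conv_rhs => rw [Finset.sum_range_succ]
    push_cast
    ring
end
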